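/- arXiv:2108.10862 — 11 statements merged into one kernel-verified Lean document; each statement's English description precedes it below -/
import Mathlib

section
/- Let (u*, v*) be a nonnegative nontrivial stationary state of the ODE system (S). Then u* > 0 and v* > 0, and the entries of the Jacobian matrix of the reaction terms at (u*, v*), namely a := r_u − μ_u − κ_u(2u* + v*), b := μ_v − κ_u u*, c := μ_u − κ_v v*, d := r_v − μ_v − κ_v(u* + 2v*), satisfy a = −(κ_u u* + μ_v v*/u*) < 0, d = −(κ_v v* + μ_u u*/v*) < 0, a + d < 0, and a·d − b·c > 0. -/
/-- For a nonnegative nontrivial stationary state (u, v) of the ODE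
system (S), both components are positive and the Jacobian entries
a = r_u - μ_u - κ_u(2u+v), b = μ_v - κ_u u, c = μ_u - κ_v v,
d = r_v - μ_v - κ_v(u+2v) satisfy a = -(κ_u u + μ_v v/u) < 0,
d = -(κ_v v + μ_u u/v) < 0, a + d < 0 and a d - b c > 0. -/
theorem stmt0 (ru rv κu κv μu μv : ℝ)
    (hκu : 0 < κu) (hκv : 0 < κv) (hμu : 0 < μu) (hμv : 0 < μv)
    (u v : ℝ) (hu : 0 ≤ u) (hv : 0 ≤ v) (hnt : (u, v) ≠ (0, 0))
    (heq1 : (ru - κu * (u + v)) * u + μv * v - μu * u = 0)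
    (heq2 : (rv - κv * (u + v)) * v + μu * u - μv * v = 0) :
    0 < u ∧ 0 < v ∧
    ru - μu - κu * (2 * u + v) = -(κu * u + μv * v / u) ∧
    ru - μu - κu * (2 * u + v) < 0 ∧
    rv - μv - κv * (u + 2 * v) = -(κv * v + μu * u / v) ∧
    rv - μv - κv * (u + 2 * v) < 0 ∧
    (ru - μu - κu * (2 * u + v)) + (rv - μv - κv * (u + 2 * v)) < 0 ∧
    (ru - μu - κu * (2 * u + v)) * (rv - μv - κv * (u + 2 * v))
      - (μv - κu * u) * (μu - κv * v) > 0 := by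
  have hu0 : 0 < u := by
    rcases lt_or_eq_of_le hu with h | h
    · exact h
    · exfalso
      have hu' : u = 0 := h.symm
      subst hu'
      have hv0 : v = 0 := by nlinarith [heq1]
      exact hnt (by simp [hv0])
  have hv0 : 0 < v := by
    rcases lt_or_eq_of_le hv with h | h
    · exact h
    · exfalso
      have hv' : v = 0 := h.symm
      subst hv'
      have hu0' : u = 0 := by nlinarith [heq2]
      exact hnt (by simp [hu0'])
  have ha : ru - μu - κu * (2 * u + v) = -(κu * u + μv * v / u) := by
    field_simp
    nlinarith [heq1]
  have hd : rv - μv - κv * (u + 2 * v) = -(κv * v + μu * u / v) := by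
    field_simp
    nlinarith [heq2]
  have hapos : 0 < κu * u + μv * v / u := by positivity
  have hdpos : 0 < κv * v + μu * u / v := by positivity
  have ha' : ru - μu - κu * (2 * u + v) < 0 := by rw [ha]; linarith
  have hd' : rv - μv - κv * (u + 2 * v) < 0 := by rw [hd]; linarith
  refine ⟨hu0, hv0, ha, ha', hd, hd', by linarith, ?_⟩
  rw [ha, hd]
  have h1 : 0 < μv * v / u := by positivity
  have h2 : 0 < μu * u / v := by positivity
  have key : (μv * v / u) * (μu * u / v) = μv * μu := by
    field_simp
  nlinarith [key, mul_pos (mul_pos hκu hu0) h2, mul_pos (mul_pos hκv hv0) h1,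
    mul_pos (mul_pos hκv hv0) hμv, mul_pos (mul_pos hκu hu0) hμu]
end

section
/- The ODE system (S) admits at most one nonnegative nontrivial stationary state: if (u₁, v₁) and (u₂, v₂) are both nonnegative nontrivial stationary states of (S), then (u₁, v₁) = (u₂, v₂). -/
/-- The ODE system (S) admits at most one nonnegative nontrivial
stationary state. -/
theorem stmt1 (ru rv κu κv μu μv : ℝ)
    (hκu : 0 < κu) (hκv : 0 < κv) (hμu : 0 < μu) (hμv : 0 < μv)
    (u₁ v₁ u₂ v₂ : ℝ)
    (hu₁ : 0 ≤ u₁) (hv₁ : 0 ≤ v₁) (hnt₁ : (u₁, v₁) ≠ (0, 0))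
    (heq1₁ : (ru - κu * (u₁ + v₁)) * u₁ + μv * v₁ - μu * u₁ = 0)
    (heq2₁ : (rv - κv * (u₁ + v₁)) * v₁ + μu * u₁ - μv * v₁ = 0)
    (hu₂ : 0 ≤ u₂) (hv₂ : 0 ≤ v₂) (hnt₂ : (u₂, v₂) ≠ (0, 0))
    (heq1₂ : (ru - κu * (u₂ + v₂)) * u₂ + μv * v₂ - μu * u₂ = 0)
    (heq2₂ : (rv - κv * (u₂ + v₂)) * v₂ + μu * u₂ - μv * v₂ = 0) :
    (u₁, v₁) = (u₂, v₂) := by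
  -- Step 1: positivity of all coordinates
  have hu₁p : 0 < u₁ := by
    rcases hu₁.lt_or_eq with h | h
    · exact h
    · exfalso
      have hv0 : μv * v₁ = 0 := by
        linear_combination heq1₁ + (ru - κu * (u₁ + v₁) - μu) * h
      have : v₁ = 0 := by
        rcases mul_eq_zero.mp hv0 with h' | h'
        · exact absurd h' (ne_of_gt hμv)
        · exact h'
      exact hnt₁ (by rw [← h, this])
  have hv₁p : 0 < v₁ := by
    rcases hv₁.lt_or_eq with h | h
    · exact h
    · exfalso
      have hu0 : μu * u₁ = 0 := by
        linear_combination heq2₁ + (rv - κv * (u₁ + v₁) - μv) * h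
      have : u₁ = 0 := by
        rcases mul_eq_zero.mp hu0 with h' | h'
        · exact absurd h' (ne_of_gt hμu)
        · exact h'
      exact hnt₁ (by rw [← h, this])
  have hu₂p : 0 < u₂ := by
    rcases hu₂.lt_or_eq with h | h
    · exact h
    · exfalso
      have hv0 : μv * v₂ = 0 := by
        linear_combination heq1₂ + (ru - κu * (u₂ + v₂) - μu) * h
      have : v₂ = 0 := by
        rcases mul_eq_zero.mp hv0 with h' | h'
        · exact absurd h' (ne_of_gt hμv)
        · exact h'
      exact hnt₂ (by rw [← h, this])
  have hv₂p : 0 < v₂ := by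
    rcases hv₂.lt_or_eq with h | h
    · exact h
    · exfalso
      have hu0 : μu * u₂ = 0 := by
        linear_combination heq2₂ + (rv - κv * (u₂ + v₂) - μv) * h
      have : u₂ = 0 := by
        rcases mul_eq_zero.mp hu0 with h' | h'
        · exact absurd h' (ne_of_gt hμu)
        · exact h'
      exact hnt₂ (by rw [← h, this])
  -- Step 2: equal ratios, u₁ v₂ = u₂ v₁
  have key : (u₁ * v₂ - u₂ * v₁) * (μu * κu * (u₁ * u₂) + μv * κv * (v₁ * v₂)) = 0 := by
    linear_combination (u₁ * v₁) * (κv * v₂ * heq1₂ - κu * u₂ * heq2₂)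
      - (u₂ * v₂) * (κv * v₁ * heq1₁ - κu * u₁ * heq2₁)
  have hposfac : 0 < μu * κu * (u₁ * u₂) + μv * κv * (v₁ * v₂) := by
    have := mul_pos (mul_pos hμu hκu) (mul_pos hu₁p hu₂p)
    have := mul_pos (mul_pos hμv hκv) (mul_pos hv₁p hv₂p)
    linarith
  have hR : u₁ * v₂ - u₂ * v₁ = 0 := by
    rcases mul_eq_zero.mp key with h | h
    · exact h
    · exact absurd h (ne_of_gt hposfac)
  -- Step 3: sum relations and equal scale
  have hL₁pos : 0 < ru * u₁ + rv * v₁ := by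
    have hK : 0 < (u₁ + v₁) * (κu * u₁ + κv * v₁) :=
      mul_pos (by linarith) (by nlinarith)
    nlinarith [heq1₁, heq2₁]
  have hG : (v₂ - v₁) * v₂ * (ru * u₁ + rv * v₁) = 0 := by
    linear_combination (v₂ ^ 2) * (heq1₁ + heq2₁) - (v₁ ^ 2) * (heq1₂ + heq2₂)
      + (κu * (v₂ * (u₁ + v₁)) + v₂ * (κu * u₁ + κv * v₁) - ru * v₁
          - κu * (u₁ * v₂ - u₂ * v₁)) * hR
  have hvv : v₁ = v₂ := by
    rcases mul_eq_zero.mp hG with h | h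
    · rcases mul_eq_zero.mp h with h' | h'
      · linarith
      · exact absurd h' (ne_of_gt hv₂p)
    · exact absurd h (ne_of_gt hL₁pos)
  have huu : u₁ = u₂ := by
    have : u₁ * v₂ = u₂ * v₂ := by rw [← hvv] at hR ⊢; linarith
    exact mul_right_cancel₀ (ne_of_gt hv₂p) this
  rw [huu, hvv]
end

section
/- If λ_A > 0, then the ODE system (S) admits a stationary state (u*, v*) with u* > 0 and v* > 0. -/
/-!
Writing `s = u + v`, a stationary state is a kernel vector of total mass `s` of the matrix
`A - s • diag(κu, κv)`. The largest eigenvalue `λ(s)` of this matrix depends continuously on `s`,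
equals `λ_A > 0` at `s = 0` and tends to `-∞`, so it vanishes at some `s > 0`. There the
eigenvector `(μv, -a)`, with `a = ru - μu - κu s < 0` the first diagonal entry, is positive, and
scaling it to total mass `s` gives the stationary state.
-/

open Filter

/-- The largest eigenvalue of a real `2 × 2` matrix with diagonal entries `a`, `d` whose
off-diagonal entries have product `p`. -/
noncomputable def perronRoot (a d p : ℝ) : ℝ := (a + d + √((a - d) ^ 2 + 4 * p)) / 2

theorem perronRoot_le_max_add_sqrt {a d p : ℝ} (hp : 0 ≤ p) :
    perronRoot a d p ≤ max a d + √p := by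
  have hsqrt : √((a - d) ^ 2 + 4 * p) ≤ |a - d| + 2 * √p := by
    rw [Real.sqrt_le_left (by positivity)]
    nlinarith [sq_abs (a - d), Real.sq_sqrt hp, abs_nonneg (a - d), Real.sqrt_nonneg p]
  have hmax : a + d + |a - d| = 2 * max a d := by
    rcases le_total a d with h | h
    · rw [abs_of_nonpos (by linarith), max_eq_right h]; ring
    · rw [abs_of_nonneg (by linarith), max_eq_left h]; ring
  unfold perronRoot
  linarith

theorem mul_eq_of_perronRoot_eq_zero {a d p : ℝ} (hp : 0 ≤ p) (h : perronRoot a d p = 0) :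
    a * d = p := by
  have hsqrt : √((a - d) ^ 2 + 4 * p) = -(a + d) := by unfold perronRoot at h; linarith
  have hsq := Real.sq_sqrt (show 0 ≤ (a - d) ^ 2 + 4 * p by positivity)
  rw [hsqrt] at hsq
  linarith

theorem left_neg_of_perronRoot_eq_zero {a d p : ℝ} (hp : 0 < p) (h : perronRoot a d p = 0) :
    a < 0 := by
  have hsqrt : |a - d| < √((a - d) ^ 2 + 4 * p) := by
    rw [← Real.sqrt_sq_eq_abs]
    exact Real.sqrt_lt_sqrt (sq_nonneg _) (by linarith)
  unfold perronRoot at h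
  linarith [le_abs_self (a - d)]

theorem exists_pos_perronRoot_sub_mul_eq_zero {a d p κ₁ κ₂ : ℝ} (hκ₁ : 0 < κ₁) (hκ₂ : 0 < κ₂)
    (hp : 0 ≤ p) (h0 : 0 < perronRoot a d p) :
    ∃ s > 0, perronRoot (a - κ₁ * s) (d - κ₂ * s) p = 0 := by
  have tendsto_sub_mul {c κ : ℝ} (hκ : 0 < κ) : Tendsto (fun s => c - κ * s) atTop atBot := by
    simpa only [id, neg_mul, ← sub_eq_add_neg] using
      tendsto_atBot_add_const_left _ c (tendsto_id.const_mul_atTop_of_neg (neg_neg_of_pos hκ))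
  obtain ⟨s₁, ha, hd, hs₁⟩ := (((tendsto_sub_mul hκ₁).eventually_lt_atBot (-√p)).and <|
    ((tendsto_sub_mul hκ₂).eventually_lt_atBot (-√p)).and (eventually_ge_atTop 0)).exists
  have hneg : perronRoot (a - κ₁ * s₁) (d - κ₂ * s₁) p < 0 :=
    (perronRoot_le_max_add_sqrt hp).trans_lt (by rw [← lt_neg_iff_add_neg]; exact max_lt ha hd)
  have hcont : Continuous fun s => perronRoot (a - κ₁ * s) (d - κ₂ * s) p := by
    unfold perronRoot; fun_prop
  obtain ⟨s, ⟨hs0, -⟩, hs⟩ :=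
    intermediate_value_Icc' hs₁ hcont.continuousOn ⟨hneg.le, by simpa using h0.le⟩
  refine ⟨s, hs0.lt_of_ne ?_, hs⟩
  rintro rfl
  simp only [mul_zero, sub_zero] at hs
  exact h0.ne' hs

theorem exists_pos_stationary_of_perronRoot_eq_zero {ru rv κu κv μu μv s : ℝ}
    (hμu : 0 < μu) (hμv : 0 < μv) (hs : 0 < s)
    (h : perronRoot (ru - μu - κu * s) (rv - μv - κv * s) (μu * μv) = 0) :
    ∃ u v : ℝ, 0 < u ∧ 0 < v ∧
      (ru - κu * (u + v)) * u + μv * v - μu * u = 0 ∧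
      (rv - κv * (u + v)) * v + μu * u - μv * v = 0 := by
  set a := ru - μu - κu * s with ha
  set d := rv - μv - κv * s with hd
  have ha0 : a < 0 := left_neg_of_perronRoot_eq_zero (by positivity) h
  have had : a * d = μu * μv := mul_eq_of_perronRoot_eq_zero (by positivity) h
  have hw : 0 < μv - a := by linarith
  have hsum : s * μv / (μv - a) + s * -a / (μv - a) = s := by field_simp; ring
  refine ⟨s * μv / (μv - a), s * -a / (μv - a), div_pos (mul_pos hs hμv) hw,
    div_pos (mul_pos hs (neg_pos.mpr ha0)) hw, ?_, ?_⟩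
  · rw [hsum]
    field_simp
    linear_combination (-(s * μv)) * ha
  · rw [hsum]
    field_simp
    linear_combination (-s) * had + (s * a) * hd

/-- If λ_A > 0, then the ODE system (S) admits a stationary state
(u*, v*) with u* > 0 and v* > 0. -/
theorem stmt2 (ru rv κu κv μu μv : ℝ)
    (hκu : 0 < κu) (hκv : 0 < κv) (hμu : 0 < μu) (hμv : 0 < μv)
    (hlamA : 0 < (ru - μu + rv - μv +
      Real.sqrt ((ru - μu - rv + μv) ^ 2 + 4 * μu * μv)) / 2) :
    ∃ u v : ℝ, 0 < u ∧ 0 < v ∧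
      (ru - κu * (u + v)) * u + μv * v - μu * u = 0 ∧
      (rv - κv * (u + v)) * v + μu * u - μv * v = 0 := by
  have hA : 0 < perronRoot (ru - μu) (rv - μv) (μu * μv) := by
    unfold perronRoot
    convert hlamA using 4 <;> ring
  obtain ⟨s, hs, hroot⟩ :=
    exists_pos_perronRoot_sub_mul_eq_zero hκu hκv (by positivity) hA
  exact exists_pos_stationary_of_perronRoot_eq_zero hμu hμv hs hroot
end

section
/- Let (u*, v*) be a nonnegative nontrivial stationary state of the ODE system (S). If r_u − μ_u > 0, then min(μ_v, r_u − μ_u)/κ_u ≤ u* ≤ max(μ_v, r_u − μ_u)/κ_u, and equality holds in either inequality if and only if μ_v = r_u − μ_u (in which case u* = μ_v/κ_u = (r_u − μ_u)/κ_u). Symmetrically, if r_v − μ_v > 0, then min(μ_u, r_v − μ_v)/κ_v ≤ v* ≤ max(μ_u, r_v − μ_v)/κ_v, with equality if and only if r_v − μ_v = μ_u. -/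
private lemma key3 (κ m a u v : ℝ) (hκ : 0 < κ) (_hm : 0 < m) (_ha : 0 < a)
    (hu : 0 < u) (hv : 0 < v)
    (h : u * (κ * u - a) = v * (m - κ * u)) :
    min m a / κ ≤ u ∧ u ≤ max m a / κ ∧
      ((u = min m a / κ ∨ u = max m a / κ) ↔ m = a) := by
  have hlow : min m a ≤ κ * u := by
    by_contra hc
    push_neg at hc
    rw [lt_min_iff] at hc
    nlinarith [hc.1, hc.2]
  have hhigh : κ * u ≤ max m a := by
    by_contra hc
    push_neg at hc
    rw [max_lt_iff] at hc
    nlinarith [hc.1, hc.2]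
  have hmc : u * κ = κ * u := mul_comm u κ
  refine ⟨(div_le_iff₀ hκ).mpr (by linarith), (le_div_iff₀ hκ).mpr (by linarith), ?_⟩
  constructor
  · rintro (he | he)
    · have hx : κ * u = min m a := by rw [he]; field_simp
      rcases le_total m a with hma | ham
      · rw [min_eq_left hma] at hx
        have h0 : u * (m - a) = 0 := by linear_combination h - (u + v) * hx
        rcases mul_eq_zero.mp h0 with h' | h'
        · exact absurd h' hu.ne'
        · linarith
      · rw [min_eq_right ham] at hx
        have h0 : v * (m - a) = 0 := by linear_combination (u + v) * hx - h
        rcases mul_eq_zero.mp h0 with h' | h'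
        · exact absurd h' hv.ne'
        · linarith
    · have hx : κ * u = max m a := by rw [he]; field_simp
      rcases le_total m a with hma | ham
      · rw [max_eq_right hma] at hx
        have h0 : v * (m - a) = 0 := by linear_combination (u + v) * hx - h
        rcases mul_eq_zero.mp h0 with h' | h'
        · exact absurd h' hv.ne'
        · linarith
      · rw [max_eq_left ham] at hx
        have h0 : u * (m - a) = 0 := by linear_combination h - (u + v) * hx
        rcases mul_eq_zero.mp h0 with h' | h'
        · exact absurd h' hu.ne'
        · linarith
  · intro hma
    subst hma
    have h0 : (u + v) * (κ * u - m) = 0 := by linear_combination h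
    rcases mul_eq_zero.mp h0 with h' | h'
    · nlinarith
    · left
      rw [min_self, eq_div_iff hκ.ne']
      linarith

/-- Bounds for the components of a nonnegative nontrivial
stationary state of (S) when the corresponding net growth rate is positive,
with equality characterized. -/
theorem stmt3 (ru rv κu κv μu μv : ℝ)
    (hκu : 0 < κu) (hκv : 0 < κv) (hμu : 0 < μu) (hμv : 0 < μv)
    (u v : ℝ) (hu : 0 ≤ u) (hv : 0 ≤ v) (hnt : (u, v) ≠ (0, 0))
    (heq1 : (ru - κu * (u + v)) * u + μv * v - μu * u = 0)
    (heq2 : (rv - κv * (u + v)) * v + μu * u - μv * v = 0) :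
    (0 < ru - μu →
      min μv (ru - μu) / κu ≤ u ∧ u ≤ max μv (ru - μu) / κu ∧
      ((u = min μv (ru - μu) / κu ∨ u = max μv (ru - μu) / κu) ↔
        μv = ru - μu)) ∧
    (0 < rv - μv →
      min μu (rv - μv) / κv ≤ v ∧ v ≤ max μu (rv - μv) / κv ∧
      ((v = min μu (rv - μv) / κv ∨ v = max μu (rv - μv) / κv) ↔
        rv - μv = μu)) := by
  have hune : u ≠ 0 := by
    intro h0
    apply hnt
    have hv0 : v = 0 := by
      rw [h0] at heq1
      have h1 : μv * v = 0 := by linear_combination heq1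
      rcases mul_eq_zero.mp h1 with h' | h'
      · exact absurd h' hμv.ne'
      · exact h'
    simp [h0, hv0]
  have hvne : v ≠ 0 := by
    intro h0
    apply hnt
    have hu0 : u = 0 := by
      rw [h0] at heq2
      have h1 : μu * u = 0 := by linear_combination heq2
      rcases mul_eq_zero.mp h1 with h' | h'
      · exact absurd h' hμu.ne'
      · exact h'
    simp [h0, hu0]
  have hup : 0 < u := lt_of_le_of_ne hu (Ne.symm hune)
  have hvp : 0 < v := lt_of_le_of_ne hv (Ne.symm hvne)
  constructor
  · intro hr
    have h : u * (κu * u - (ru - μu)) = v * (μv - κu * u) := by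
      linear_combination -heq1
    exact key3 κu μv (ru - μu) u v hκu hμv hr hup hvp h
  · intro hr
    have h : v * (κv * v - (rv - μv)) = u * (μu - κv * v) := by
      linear_combination -heq2
    have := key3 κv μu (rv - μv) v u hκv hμu hr hvp hup h
    exact ⟨this.1, this.2.1, by rw [this.2.2, eq_comm]⟩
end

section
/- Let (u*, v*) be a nonnegative nontrivial stationary state of the ODE system (S). If r_u − μ_u ≤ 0, then 0 < u* < μ_v/κ_u. Symmetrically, if r_v − μ_v ≤ 0, then 0 < v* < μ_u/κ_v. -/
/-- For a nonnegative nontrivial stationary state (u, v) of (S):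
if r_u - μ_u ≤ 0 then 0 < u < μ_v/κ_u, and if r_v - μ_v ≤ 0 then
0 < v < μ_u/κ_v. -/
theorem stmt4 (ru rv κu κv μu μv : ℝ)
    (hκu : 0 < κu) (hκv : 0 < κv) (hμu : 0 < μu) (hμv : 0 < μv)
    (u v : ℝ) (hu : 0 ≤ u) (hv : 0 ≤ v) (hnt : (u, v) ≠ (0, 0))
    (heq1 : (ru - κu * (u + v)) * u + μv * v - μu * u = 0)
    (heq2 : (rv - κv * (u + v)) * v + μu * u - μv * v = 0) :
    (ru - μu ≤ 0 → 0 < u ∧ u < μv / κu) ∧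
    (rv - μv ≤ 0 → 0 < v ∧ v < μu / κv) := by
  have himp1 : u = 0 → v = 0 := by
    intro h
    subst h
    have h1 : μv * v = 0 := by linarith [heq1]
    exact (mul_eq_zero.mp h1).resolve_left (ne_of_gt hμv)
  have himp2 : v = 0 → u = 0 := by
    intro h
    subst h
    have h1 : μu * u = 0 := by linarith [heq2]
    exact (mul_eq_zero.mp h1).resolve_left (ne_of_gt hμu)
  have hu0 : 0 < u := by
    rcases hu.lt_or_eq with h | h
    · exact h
    · exact absurd (by rw [← h, himp1 h.symm]) hnt
  have hv0 : 0 < v := by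
    rcases hv.lt_or_eq with h | h
    · exact h
    · exact absurd (by rw [← h, himp2 h.symm]) hnt
  constructor
  · intro hr
    refine ⟨hu0, ?_⟩
    rw [lt_div_iff₀ hκu]
    nlinarith [mul_nonpos_of_nonpos_of_nonneg hr hu]
  · intro hr
    refine ⟨hv0, ?_⟩
    rw [lt_div_iff₀ hκv]
    nlinarith [mul_nonpos_of_nonpos_of_nonneg hr hv]
end

section
/- Let r_u, r_v ∈ ℝ and μ_u, μ_v > 0. The function λ₁(α) := (1/2)·(r_u − α μ_u + r_v − α μ_v + √((r_u − α μ_u − (r_v − α μ_v))² + 4 α² μ_u μ_v)) converges, as α → +∞, to the weighted average (μ_v/(μ_u+μ_v)) r_u + (μ_u/(μ_u+μ_v)) r_v. -/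
/-!
With `s = μu + μv`, the identity `(μu - μv)² + 4 μu μv = s²` turns the radicand into the quadratic
`s² α² + b α + c` with `b = -2 (ru - rv) (μu - μv)`, so `2 λ₁(α) = ru + rv + (√(s² α² + b α + c) - s α)`.
The bracket is the difference quotient of `t ↦ √(s² + b t + c t²)` at `0` with step `t = α⁻¹`, so it
tends to the derivative `b / (2 s)`, and `½ (ru + rv + b / (2 s))` is the weighted average.
-/

open Filter Topology

theorem tendsto_sqrt_quadratic_sub_atTop {s : ℝ} (hs : 0 < s) (b c : ℝ) :
    Tendsto (fun x => √(s ^ 2 * x ^ 2 + b * x + c) - s * x) atTop (𝓝 (b / (2 * s))) := by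
  set f : ℝ → ℝ := fun t => √(s ^ 2 + b * t + c * t ^ 2)
  have hf0 : f 0 = s := by simp [f, Real.sqrt_sq hs.le]
  have hf : HasDerivAt f (b / (2 * s)) 0 := by
    have hq : HasDerivAt (fun t : ℝ => s ^ 2 + b * t + c * t ^ 2) b 0 :=
      (((hasDerivAt_id' (0 : ℝ)).const_mul b).const_add (s ^ 2)).add
        (((hasDerivAt_id' (0 : ℝ)).pow 2).const_mul c) |>.congr_deriv (by norm_num)
    have h := hq.sqrt (by simp [hs.ne'])
    change HasDerivAt f (b / (2 * f 0)) 0 at h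
    rwa [hf0] at h
  refine (hf.tendsto_slope_zero_right.comp tendsto_inv_atTop_nhdsGT_zero).congr' ?_
  filter_upwards [eventually_gt_atTop 0] with x hx
  have hquad : s ^ 2 * x ^ 2 + b * x + c = x ^ 2 * (s ^ 2 + b * x⁻¹ + c * x⁻¹ ^ 2) := by
    field_simp
  simp only [Function.comp_apply, zero_add, inv_inv, smul_eq_mul, hf0, f, hquad,
    Real.sqrt_mul (sq_nonneg x), Real.sqrt_sq hx.le]
  ring

/-- As α → +∞, λ₁(α) converges to the weighted average
(μ_v/(μ_u+μ_v)) r_u + (μ_u/(μ_u+μ_v)) r_v. -/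
theorem stmt8 (ru rv μu μv : ℝ) (hμu : 0 < μu) (hμv : 0 < μv) :
    Filter.Tendsto (fun α : ℝ =>
      (1 / 2) * (ru - α * μu + rv - α * μv +
        Real.sqrt ((ru - α * μu - (rv - α * μv)) ^ 2 + 4 * α ^ 2 * μu * μv)))
      Filter.atTop
      (nhds ((μv / (μu + μv)) * ru + (μu / (μu + μv)) * rv)) := by
  have hs : 0 < μu + μv := add_pos hμu hμv
  have hlim : (μv / (μu + μv)) * ru + (μu / (μu + μv)) * rv =
      1 / 2 * (ru + rv + -2 * (ru - rv) * (μu - μv) / (2 * (μu + μv))) := by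
    field_simp
    ring
  rw [hlim]
  refine (((tendsto_sqrt_quadratic_sub_atTop hs _ ((ru - rv) ^ 2)).const_add (ru + rv)).const_mul
    (1 / 2)).congr fun α => ?_
  have hquad : (μu + μv) ^ 2 * α ^ 2 + -2 * (ru - rv) * (μu - μv) * α + (ru - rv) ^ 2 =
      (ru - α * μu - (rv - α * μv)) ^ 2 + 4 * α ^ 2 * μu * μv := by
    ring
  rw [hquad]
  ring
end

section
/- Let r_u, r_v ∈ ℝ and μ_u, μ_v > 0, and suppose (μ_v/(μ_u+μ_v)) r_u + (μ_u/(μ_u+μ_v)) r_v > 0. Then λ₁(α) := (1/2)·(r_u − α μ_u + r_v − α μ_v + √((r_u − α μ_u − (r_v − α μ_v))² + 4 α² μ_u μ_v)) satisfies λ₁(α) > 0 for every α ≥ 0; in particular λ₁(1) > 0. -/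
theorem aux_key (ru rv μu μv α : ℝ) (hμu : 0 < μu) (hμv : 0 < μv)
    (hS : 0 < μv * ru + μu * rv) (hα : 0 ≤ α)
    (ht : ru + rv - α * (μu + μv) ≤ 0) :
    ru * rv < α * (μv * ru + μu * rv) := by
  have hsum : (0:ℝ) < μu + μv := by linarith
  by_contra h
  push_neg at h
  have h12 : μv * ru ^ 2 + μu * rv ^ 2 ≤ 0 := by
    nlinarith [mul_nonneg (sub_nonneg.mpr (by linarith : ru + rv ≤ α * (μu + μv))) hS.le,
      mul_nonneg (sub_nonneg.mpr h) hsum.le]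
  nlinarith [mul_pos hS hS, mul_nonneg (mul_pos hμu hμv).le (sq_nonneg (ru - rv)),
    mul_nonneg hsum.le (neg_nonneg.mpr h12)]

/-- If the weighted average (μ_v r_u + μ_u r_v)/(μ_u+μ_v) is
positive, then λ₁(α) > 0 for every α ≥ 0; in particular λ₁(1) > 0. -/
theorem stmt9 (ru rv μu μv : ℝ) (hμu : 0 < μu) (hμv : 0 < μv)
    (havg : 0 < (μv / (μu + μv)) * ru + (μu / (μu + μv)) * rv) :
    (∀ α : ℝ, 0 ≤ α →
      0 < (1 / 2) * (ru - α * μu + rv - α * μv +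
        Real.sqrt ((ru - α * μu - (rv - α * μv)) ^ 2 + 4 * α ^ 2 * μu * μv))) ∧
    0 < (1 / 2) * (ru - 1 * μu + rv - 1 * μv +
      Real.sqrt ((ru - 1 * μu - (rv - 1 * μv)) ^ 2 + 4 * 1 ^ 2 * μu * μv)) := by
  have hsum : 0 < μu + μv := by linarith
  have hS : 0 < μv * ru + μu * rv := by
    have := mul_pos havg hsum
    field_simp at this
    linarith [this]
  have main : ∀ α : ℝ, 0 ≤ α →
      0 < (1 / 2) * (ru - α * μu + rv - α * μv +
        Real.sqrt ((ru - α * μu - (rv - α * μv)) ^ 2 + 4 * α ^ 2 * μu * μv)) := by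
    intro α hα
    set X := (ru - α * μu - (rv - α * μv)) ^ 2 + 4 * α ^ 2 * μu * μv with hX
    have hXnn : 0 ≤ X := by positivity
    rcases lt_or_ge 0 (ru - α * μu + rv - α * μv) with ht | ht
    · have := Real.sqrt_nonneg X
      linarith
    · have hkey : ru * rv < α * (μv * ru + μu * rv) :=
        aux_key ru rv μu μv α hμu hμv hS hα (by linarith)
      have h2 : (-(ru - α * μu + rv - α * μv)) ^ 2 < X := by
        have : (ru - α * μu + rv - α * μv) ^ 2 < X := by nlinarith
        nlinarith [this]
      have h3 : -(ru - α * μu + rv - α * μv) < Real.sqrt X :=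
        (Real.lt_sqrt (by linarith)).mpr h2
      linarith
  exact ⟨main, main 1 (by norm_num)⟩
end

section
/- Let r_u ∈ ℝ and κ_u, μ_u, μ_v > 0, and let u*, v* > 0 satisfy the stationary relation r_u − μ_u − κ_u(u* + v*) + μ_v v*/u* = 0. Then for all u, v > 0 one has (u − u*)·(r_u − μ_u − κ_u(u + v) + μ_v v/u) ≤ −κ_u (u − u*)² − (κ_u − μ_v/u*)(u − u*)(v − v*), and the inequality is strict unless u = u*. -/
/-- Per-component dissipation inequality underlying the Lyapunov
functional: given the stationary relation for (u*, v*), for all u, v > 0,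
(u − u*)(r_u − μ_u − κ_u(u+v) + μ_v v/u)
  ≤ −κ_u (u − u*)² − (κ_u − μ_v/u*)(u − u*)(v − vs),
strictly unless u = u*. -/
theorem stmt11 (ru κu μu μv : ℝ) (hκu : 0 < κu) (hμu : 0 < μu) (hμv : 0 < μv)
    (us vs : ℝ) (hus : 0 < us) (hvs : 0 < vs)
    (hstat : ru - μu - κu * (us + vs) + μv * vs / us = 0) :
    ∀ u v : ℝ, 0 < u → 0 < v →
      ((u - us) * (ru - μu - κu * (u + v) + μv * v / u) ≤
        -(κu * (u - us) ^ 2) - (κu - μv / us) * ((u - us) * (v - vs))) ∧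
      (u ≠ us →
        (u - us) * (ru - μu - κu * (u + v) + μv * v / u) <
          -(κu * (u - us) ^ 2) - (κu - μv / us) * ((u - us) * (v - vs))) := by
  intro u v hu hv
  have hru : ru = μu + κu * (us + vs) - μv * vs / us := by
    field_simp at hstat ⊢; linarith
  have key : (u - us) * (ru - μu - κu * (u + v) + μv * v / u) =
      -(κu * (u - us) ^ 2) - (κu - μv / us) * ((u - us) * (v - vs))
        - μv * v * (u - us) ^ 2 / (u * us) := by
    subst hru
    field_simp
    ring
  constructor
  · rw [key]
    have h : 0 ≤ μv * v * (u - us) ^ 2 / (u * us) := by positivity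
    linarith
  · intro hne
    rw [key]
    have h : 0 < μv * v * (u - us) ^ 2 / (u * us) := by
      have : (u - us) ^ 2 > 0 := pow_two_pos_of_ne_zero (sub_ne_zero_of_ne hne)
      positivity
    linarith
end

section
/- Assume λ_A > 0 and max(r_u − μ_u, r_v − μ_v) > 0, and let (u*, v*) with u*, v* > 0 be the stationary state of the ODE system (S). Define F_u(u) := u − u* − u* ln(u/u*), F_v(v) := v − v* − v* ln(v/v*), and F^K(u, v) := F_u(u) + K F_v(v). Then there exists K > 0 such that for every differentiable solution (u(t), v(t)) of (S) with u(t) > 0 and v(t) > 0, the function t ↦ F^K(u(t), v(t)) has nonpositive derivative for all t, and the derivative is strictly negative at every time t at which (u(t), v(t)) ≠ (u*, v*). -/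
/-!
Along a positive solution, `d/dt F^K = (1 - u*/u) u' + K (1 - v*/v) v'`. After eliminating
`r_u, r_v` with the stationarity equations, `u v u* v*` times this rate is minus a quadratic form
in `(u - u*, v - v*)`. Writing `α² = u* v* κ_u`, `β² = v* μ_v`, `γ² = u* v* κ_v`, `δ² = u* μ_u`,
the weight `K = s²` with `s = (α + β) / (γ + δ)` turns the form into the sum of squares
`u v (α (u - u*) + s γ (v - v*))² + (β v (u - u*) - s δ u (v - v*))²`.
Unless `u = u*` and `v = v*`, the first square vanishes only if `u - u*` and `v - v*` have
opposite signs, the second only if they have the same sign.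
-/

noncomputable def volterra (c x : ℝ) : ℝ := x - c - c * Real.log (x / c)

theorem hasDerivAt_volterra {c x : ℝ} (hc : c ≠ 0) (hx : x ≠ 0) :
    HasDerivAt (volterra c) (1 - c / x) x := by
  have hlog := ((hasDerivAt_id' x).div_const c).log (div_ne_zero hx hc)
  refine (((hasDerivAt_id' x).sub_const c).sub (hlog.const_mul c)).congr_deriv ?_
  field_simp

theorem eq_zero_of_add_eq_zero_of_mul_eq_mul {p q r t a b : ℝ}
    (hp : 0 < p) (hq : 0 < q) (hr : 0 < r) (ht : 0 < t)
    (h₁ : p * a + q * b = 0) (h₂ : r * a = t * b) : a = 0 ∧ b = 0 := by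
  have hb : (p * t + q * r) * b = 0 := by linear_combination r * h₁ - p * h₂
  have hb : b = 0 := (mul_eq_zero.1 hb).resolve_left (by positivity)
  subst hb
  exact ⟨(mul_eq_zero.1 (by simpa using h₁)).resolve_left hp.ne', rfl⟩

section Dissipation

variable {ru rv κu κv μu μv us vs α β γ δ s x y : ℝ}

theorem lyapunov_rate_eq_neg_sum_sq_div
    (hus : us ≠ 0) (hvs : vs ≠ 0) (hx : x ≠ 0) (hy : y ≠ 0)
    (hstat1 : (ru - κu * (us + vs)) * us + μv * vs - μu * us = 0)
    (hstat2 : (rv - κv * (us + vs)) * vs + μu * us - μv * vs = 0)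
    (hα : α ^ 2 = us * vs * κu) (hβ : β ^ 2 = vs * μv) (hγ : γ ^ 2 = us * vs * κv)
    (hδ : δ ^ 2 = us * μu) (hs : s * (γ + δ) = α + β) :
    (1 - us / x) * ((ru - κu * (x + y)) * x + μv * y - μu * x)
      + s ^ 2 * ((1 - vs / y) * ((rv - κv * (x + y)) * y + μu * x - μv * y))
    = -(x * y * (α * (x - us) + s * γ * (y - vs)) ^ 2
        + (β * y * (x - us) - s * δ * x * (y - vs)) ^ 2) / (us * vs * x * y) := by
  rw [eq_div_iff (by simp [*])]
  have hclear : ((1 - us / x) * ((ru - κu * (x + y)) * x + μv * y - μu * x)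
      + s ^ 2 * ((1 - vs / y) * ((rv - κv * (x + y)) * y + μu * x - μv * y))) * (us * vs * x * y)
      = us * vs * (y * (x - us) * ((ru - κu * (x + y)) * x + μv * y - μu * x)
        + s ^ 2 * (x * (y - vs) * ((rv - κv * (x + y)) * y + μu * x - μv * y))) := by
    field_simp
  linear_combination hclear + (vs * y * (x - us) * x) * hstat1
    + (s ^ 2 * us * x * (y - vs) * y) * hstat2
    + (x * y * (x - us) * (x - us + (y - vs))) * hα
    + (s ^ 2 * x * y * (y - vs) * (x - us + (y - vs))) * hγ
    + (y * (x - us) * (y * (x - us) - x * (y - vs))) * hβ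
    + (s ^ 2 * x * (y - vs) * (x * (y - vs) - y * (x - us))) * hδ
    + ((α - β - s * (γ - δ)) * x * y * (x - us) * (y - vs)) * hs

theorem lyapunov_sum_sq_pos (hα : 0 < α) (hβ : 0 < β) (hγ : 0 < γ) (hδ : 0 < δ) (hs : 0 < s)
    (hx : 0 < x) (hy : 0 < y) (hne : (x, y) ≠ (us, vs)) :
    0 < x * y * (α * (x - us) + s * γ * (y - vs)) ^ 2
      + (β * y * (x - us) - s * δ * x * (y - vs)) ^ 2 := by
  refine (by positivity : (0 : ℝ) ≤ _).lt_of_ne fun h => hne ?_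
  obtain ⟨hsq₁, hsq₂⟩ := (add_eq_zero_iff_of_nonneg (by positivity) (by positivity)).1 h.symm
  have hlin : α * (x - us) + s * γ * (y - vs) = 0 := by simpa [hx.ne', hy.ne'] using hsq₁
  obtain ⟨hu, hv⟩ := eq_zero_of_add_eq_zero_of_mul_eq_mul hα (by positivity)
    (by positivity : 0 < β * y) (by positivity : 0 < s * δ * x) hlin
    (sub_eq_zero.1 (sq_eq_zero_iff.1 hsq₂))
  rw [sub_eq_zero.1 hu, sub_eq_zero.1 hv]

end Dissipation

theorem stmt12_general (ru rv κu κv μu μv : ℝ)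
    (hκu : 0 < κu) (hκv : 0 < κv) (hμu : 0 < μu) (hμv : 0 < μv)
    (us vs : ℝ) (hus : 0 < us) (hvs : 0 < vs)
    (hstat1 : (ru - κu * (us + vs)) * us + μv * vs - μu * us = 0)
    (hstat2 : (rv - κv * (us + vs)) * vs + μu * us - μv * vs = 0) :
    ∃ K : ℝ, 0 < K ∧
      ∀ u v : ℝ → ℝ,
        (∀ t : ℝ, HasDerivAt u ((ru - κu * (u t + v t)) * u t + μv * v t - μu * u t) t) →
        (∀ t : ℝ, HasDerivAt v ((rv - κv * (u t + v t)) * v t + μu * u t - μv * v t) t) →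
        (∀ t : ℝ, 0 < u t) → (∀ t : ℝ, 0 < v t) →
        ∀ t : ℝ,
          deriv (fun s => (u s - us - us * Real.log (u s / us)) +
            K * (v s - vs - vs * Real.log (v s / vs))) t ≤ 0 ∧
          ((u t, v t) ≠ (us, vs) →
            deriv (fun s => (u s - us - us * Real.log (u s / us)) +
              K * (v s - vs - vs * Real.log (v s / vs))) t < 0) := by
  have sqrt_spec {a : ℝ} (ha : 0 < a) : 0 < √a ∧ √a ^ 2 = a :=
    ⟨Real.sqrt_pos.2 ha, Real.sq_sqrt ha.le⟩
  obtain ⟨hα, hα2⟩ := sqrt_spec (by positivity : 0 < us * vs * κu)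
  obtain ⟨hβ, hβ2⟩ := sqrt_spec (by positivity : 0 < vs * μv)
  obtain ⟨hγ, hγ2⟩ := sqrt_spec (by positivity : 0 < us * vs * κv)
  obtain ⟨hδ, hδ2⟩ := sqrt_spec (by positivity : 0 < us * μu)
  obtain ⟨s, hs, hsdef⟩ : ∃ s : ℝ, 0 < s ∧ s * (√(us * vs * κv) + √(us * μu))
      = √(us * vs * κu) + √(vs * μv) :=
    ⟨_, by positivity, div_mul_cancel₀ _ (by positivity)⟩
  refine ⟨s ^ 2, by positivity, fun u v hu hv hu0 hv0 t => ?_⟩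
  have hut := hu0 t
  have hvt := hv0 t
  have hF := ((hasDerivAt_volterra hus.ne' hut.ne').comp t (hu t)).add
    (((hasDerivAt_volterra hvs.ne' hvt.ne').comp t (hv t)).const_mul (s ^ 2))
  have hrate : deriv (fun τ => (u τ - us - us * Real.log (u τ / us)) +
      s ^ 2 * (v τ - vs - vs * Real.log (v τ / vs))) t = _ := hF.deriv
  rw [hrate, lyapunov_rate_eq_neg_sum_sq_div hus.ne' hvs.ne' hut.ne' hvt.ne'
    hstat1 hstat2 hα2 hβ2 hγ2 hδ2 hsdef]
  exact ⟨div_nonpos_of_nonpos_of_nonneg (neg_nonpos.2 (by positivity)) (by positivity),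
    fun hne => div_neg_of_neg_of_pos
      (neg_neg_of_pos (lyapunov_sum_sq_pos hα hβ hγ hδ hs hut hvt hne)) (by positivity)⟩

/-- Under λ_A > 0 and max(r_u − μ_u, r_v − μ_v) > 0, letting
(u*, v*) be the positive stationary state, there is a weight K > 0 making
F^K(u,v) = F_u(u) + K F_v(v) a strict Lyapunov functional along positive
solutions of (S). -/
theorem stmt12 (ru rv κu κv μu μv : ℝ)
    (hκu : 0 < κu) (hκv : 0 < κv) (hμu : 0 < μu) (hμv : 0 < μv)
    (hlamA : 0 < (ru - μu + rv - μv +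
      Real.sqrt ((ru - μu - rv + μv) ^ 2 + 4 * μu * μv)) / 2)
    (hmax : 0 < max (ru - μu) (rv - μv))
    (us vs : ℝ) (hus : 0 < us) (hvs : 0 < vs)
    (hstat1 : (ru - κu * (us + vs)) * us + μv * vs - μu * us = 0)
    (hstat2 : (rv - κv * (us + vs)) * vs + μu * us - μv * vs = 0) :
    ∃ K : ℝ, 0 < K ∧
      ∀ u v : ℝ → ℝ,
        (∀ t : ℝ, HasDerivAt u ((ru - κu * (u t + v t)) * u t + μv * v t - μu * u t) t) →
        (∀ t : ℝ, HasDerivAt v ((rv - κv * (u t + v t)) * v t + μu * u t - μv * v t) t) →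
        (∀ t : ℝ, 0 < u t) → (∀ t : ℝ, 0 < v t) →
        ∀ t : ℝ,
          deriv (fun s => (u s - us - us * Real.log (u s / us)) +
            K * (v s - vs - vs * Real.log (v s / vs))) t ≤ 0 ∧
          ((u t, v t) ≠ (us, vs) →
            deriv (fun s => (u s - us - us * Real.log (u s / us)) +
              K * (v s - vs - vs * Real.log (v s / vs))) t < 0) :=
  stmt12_general ru rv κu κv μu μv hκu hκv hμu hμv us vs hus hvs hstat1 hstat2
end

section
/- Let k : ℝ → ℝ be continuous and strictly concave, with k(0) < 0, and suppose there exist α > 0 and β > 0 such that k(λ) ≤ α − β λ² for all λ ∈ ℝ. Define c* := inf over λ > 0 of (−k(λ)/λ). Then: (i) for every c < c* and every λ > 0, cλ < −k(λ); (ii) there exists a unique λ* > 0 such that c* λ* = −k(λ*), and for every λ > 0 with λ ≠ λ*, c* λ < −k(λ); (iii) for every c > c* there exist 0 < λ₁* < λ₂* with c λ₁* = −k(λ₁*) and c λ₂* = −k(λ₂*), such that cλ > −k(λ) for λ ∈ (λ₁*, λ₂*), and cλ < −k(λ) for every λ > 0 with λ ∉ [λ₁*, λ₂*]. -/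
private lemma strict_ineq15 (k : ℝ → ℝ) (hconc : StrictConcaveOn ℝ Set.univ k)
    (c x y t : ℝ) (hxy : x ≠ y) (ht0 : 0 < t) (ht1 : t < 1) :
    -k (t*x + (1-t)*y) - c*(t*x+(1-t)*y) <
      t*(-k x - c*x) + (1-t)*(-k y - c*y) := by
  have h := hconc.2 (Set.mem_univ x) (Set.mem_univ y) hxy ht0 (by linarith : (0:ℝ) < 1 - t)
      (by ring)
  simp only [smul_eq_mul] at h
  nlinarith [h]

private lemma two_zeros15 (k : ℝ → ℝ) (hconc : StrictConcaveOn ℝ Set.univ k)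
    (c a b : ℝ) (ha : 0 < a) (hab : a < b)
    (hza : c * a = -k a) (hzb : c * b = -k b) :
    (∀ l, a < l → l < b → -k l < c * l) ∧
    (∀ l, 0 < l → l ∉ Set.Icc a b → c * l < -k l) := by
  have hba : (0:ℝ) < b - a := by linarith
  constructor
  · intro l h1 h2
    have hbl : (0:ℝ) < b - l := by linarith
    have ht0 : 0 < (b-l)/(b-a) := div_pos hbl hba
    have ht1 : (b-l)/(b-a) < 1 := (div_lt_one hba).2 (by linarith)
    have hpt : ((b-l)/(b-a))*a + (1-(b-l)/(b-a))*b = l := by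
      field_simp
      ring
    have h := strict_ineq15 k hconc c a b ((b-l)/(b-a)) (ne_of_lt hab) ht0 ht1
    rw [hpt] at h
    nlinarith [h]
  · intro l hl hmem
    rw [Set.mem_Icc] at hmem
    push_neg at hmem
    rcases lt_or_ge l a with hla | hla
    · -- l < a
      have hbl : (0:ℝ) < b - l := by linarith
      have ht0 : 0 < (b-a)/(b-l) := div_pos hba hbl
      have ht1 : (b-a)/(b-l) < 1 := (div_lt_one hbl).2 (by linarith)
      have hpt : ((b-a)/(b-l))*l + (1-(b-a)/(b-l))*b = a := by
        field_simp
        ring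
      have h := strict_ineq15 k hconc c l b ((b-a)/(b-l)) (by intro h; linarith) ht0 ht1
      rw [hpt] at h
      nlinarith [h, ht0]
    · -- b < l
      have hbl : b < l := hmem hla
      have hla' : (0:ℝ) < l - a := by linarith
      have ht0 : 0 < (l-b)/(l-a) := div_pos (by linarith) hla'
      have ht1 : (l-b)/(l-a) < 1 := (div_lt_one hla').2 (by linarith)
      have hpt : ((l-b)/(l-a))*a + (1-(l-b)/(l-a))*l = b := by
        field_simp
        ring
      have h := strict_ineq15 k hconc c a l ((l-b)/(l-a)) (by intro h; linarith) ht0 ht1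
      rw [hpt] at h
      nlinarith [h, ht0, ht1]

set_option maxHeartbeats 1000000 in
/-- Properties of the minimal speed c* = inf_{λ>0} (−k(λ)/λ) for
a continuous, strictly concave k with k(0) < 0 and k(λ) ≤ α − βλ². -/
theorem stmt15 (k : ℝ → ℝ) (hcont : Continuous k)
    (hconc : StrictConcaveOn ℝ Set.univ k) (hk0 : k 0 < 0)
    (α β : ℝ) (hα : 0 < α) (hβ : 0 < β)
    (hbound : ∀ l : ℝ, k l ≤ α - β * l ^ 2) :
    let cstar := sInf ((fun l : ℝ => -k l / l) '' Set.Ioi 0)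
    (∀ c : ℝ, c < cstar → ∀ l : ℝ, 0 < l → c * l < -k l) ∧
    (∃ ls : ℝ, 0 < ls ∧ cstar * ls = -k ls ∧
      (∀ l : ℝ, 0 < l → cstar * l = -k l → l = ls) ∧
      (∀ l : ℝ, 0 < l → l ≠ ls → cstar * l < -k l)) ∧
    (∀ c : ℝ, cstar < c → ∃ l1 l2 : ℝ, 0 < l1 ∧ l1 < l2 ∧
      c * l1 = -k l1 ∧ c * l2 = -k l2 ∧
      (∀ l : ℝ, l1 < l → l < l2 → -k l < c * l) ∧
      (∀ l : ℝ, 0 < l → l ∉ Set.Icc l1 l2 → c * l < -k l)) := by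
  intro cstar
  set g : ℝ → ℝ := fun l => -k l / l with hg
  set S : Set ℝ := g '' Set.Ioi 0 with hSdef
  have hcdef : cstar = sInf S := rfl
  have hSne : S.Nonempty := ⟨g 1, ⟨1, by norm_num, rfl⟩⟩
  -- continuity near 0
  obtain ⟨δ, hδpos, hδ⟩ : ∃ δ > 0, ∀ x : ℝ, |x| < δ → k x < k 0 / 2 := by
    have hU : IsOpen (k ⁻¹' Set.Iio (k 0 / 2)) := (isOpen_Iio).preimage hcont
    have h0 : (0:ℝ) ∈ k ⁻¹' Set.Iio (k 0 / 2) := by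
      simp only [Set.mem_preimage, Set.mem_Iio]; linarith
    rcases Metric.isOpen_iff.1 hU 0 h0 with ⟨δ, hδ, hball⟩
    exact ⟨δ, hδ, fun x hx => hball (by simpa [Real.dist_eq] using hx)⟩
  have hP : 0 < -(k 0)/2 := by linarith
  -- bounded below
  have hSbdd : BddBelow S := by
    refine ⟨min 0 (-α/δ), ?_⟩
    rintro x ⟨l, hl, rfl⟩
    rw [Set.mem_Ioi] at hl
    by_cases hkl : k l ≤ 0
    · have : 0 ≤ g l := div_nonneg (by linarith) hl.le
      exact le_trans (min_le_left _ _) this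
    · push_neg at hkl
      have hlδ : δ ≤ l := by
        by_contra h
        push_neg at h
        have := hδ l (by rw [abs_of_pos hl]; exact h)
        linarith
      have h1 : -α / l ≤ g l := by
        apply (div_le_div_iff_of_pos_right hl).2
        have := hbound l; nlinarith [sq_nonneg l]
      have h2 : -α / δ ≤ -α / l := by
        rw [neg_div, neg_div, neg_le_neg_iff]
        exact div_le_div_of_nonneg_left hα.le hδpos hlδ
      exact le_trans (min_le_right _ _) (le_trans h2 h1)
  have hle : ∀ l : ℝ, 0 < l → cstar ≤ g l := fun l hl => csInf_le hSbdd ⟨l, hl, rfl⟩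
  have hmul : ∀ l : ℝ, 0 < l → cstar * l ≤ -k l := by
    intro l hl
    exact (le_div_iff₀ hl).1 (hle l hl)
  -- part (i)
  have part1 : ∀ c : ℝ, c < cstar → ∀ l : ℝ, 0 < l → c * l < -k l := by
    intro c hc l hl
    have h1 := hmul l hl
    nlinarith [mul_lt_mul_of_pos_right hc hl]
  -- existence of a point with value < cstar + 1
  obtain ⟨x, hxS, hx⟩ := exists_lt_of_csInf_lt hSne (by linarith : cstar < cstar + 1)
  obtain ⟨l0, hl0, rfl⟩ := hxS
  rw [Set.mem_Ioi] at hl0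
  set T : ℝ := max (cstar + 2) 1 with hT
  have hT1 : (1:ℝ) ≤ T := le_max_right _ _
  have hT0 : (0:ℝ) < T := by linarith
  have hTc : cstar + 1 < T := lt_of_lt_of_le (by linarith) (le_max_left _ _)
  set a0 : ℝ := min δ ((-(k 0)/2)/T) with ha0
  have ha0pos : 0 < a0 := lt_min hδpos (div_pos hP hT0)
  set b0 : ℝ := max (max 1 ((T+α)/β)) l0 with hb0
  have hb0l0 : l0 ≤ b0 := le_max_right _ _
  have hb01 : (1:ℝ) ≤ b0 := le_trans (le_max_left _ _) (le_max_left _ _)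
  -- small-λ bound
  have hsmall : ∀ l : ℝ, 0 < l → l < a0 → T < g l := by
    intro l hl hla
    have hlδ : l < δ := lt_of_lt_of_le hla (min_le_left _ _)
    have hkl := hδ l (by rw [abs_of_pos hl]; exact hlδ)
    have h1 : -(k 0)/2 < -k l := by linarith
    have h2 : l < (-(k 0)/2)/T := lt_of_lt_of_le hla (min_le_right _ _)
    have h3 : T * l < -(k 0)/2 := by
      rw [lt_div_iff₀ hT0] at h2; linarith [h2]
    have : T * l < -k l := by linarith
    rw [hg]
    exact (lt_div_iff₀ hl).2 (by linarith)
  -- large-λ bound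
  have hlarge : ∀ l : ℝ, b0 < l → T < g l := by
    intro l hl
    have hl1 : (1:ℝ) < l := lt_of_le_of_lt hb01 hl
    have hl0' : (0:ℝ) < l := by linarith
    have hβl : T + α < β * l := by
      have : (T+α)/β ≤ b0 := le_trans (le_max_right _ _) (le_max_left _ _)
      have h2 : (T+α)/β < l := lt_of_le_of_lt this hl
      rw [div_lt_iff₀ hβ] at h2; linarith
    have hb := hbound l
    rw [hg]
    apply (lt_div_iff₀ hl0').2
    nlinarith
  set a : ℝ := min a0 l0 with ha
  have hapos : 0 < a := lt_min ha0pos hl0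
  have hal0 : a ≤ l0 := min_le_right _ _
  have hab : a ≤ b0 := le_trans hal0 hb0l0
  -- continuity of g on [a, b0]
  have hgcont : ContinuousOn g (Set.Icc a b0) := by
    apply ContinuousOn.div (hcont.neg.continuousOn) continuousOn_id
    intro x hx
    exact ne_of_gt (lt_of_lt_of_le hapos hx.1)
  obtain ⟨ls, hlsmem, hmin⟩ := (isCompact_Icc).exists_isMinOn ⟨l0, hal0, hb0l0⟩ hgcont
  have hlspos : 0 < ls := lt_of_lt_of_le hapos hlsmem.1
  have hminval : ∀ y ∈ Set.Icc a b0, g ls ≤ g y := fun y hy => hmin hy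
  have hgls : g ls = cstar := by
    apply le_antisymm
    · rw [hcdef]
      apply le_csInf hSne
      rintro x ⟨l, hl, rfl⟩
      rw [Set.mem_Ioi] at hl
      by_cases hmem : l ∈ Set.Icc a b0
      · exact hminval l hmem
      · rw [Set.mem_Icc] at hmem
        push_neg at hmem
        have hTgl : T < g l := by
          rcases lt_or_ge l a with h | h
          · exact hsmall l hl (lt_of_lt_of_le h (min_le_left _ _))
          · exact hlarge l (hmem h)
        have : g ls ≤ g l0 := hminval l0 ⟨hal0, hb0l0⟩
        linarith
    · exact hle ls hlspos
  have hlseq : cstar * ls = -k ls := by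
    rw [← hgls, hg]
    field_simp
  -- uniqueness
  have huniq : ∀ l : ℝ, 0 < l → cstar * l = -k l → l = ls := by
    intro l hl hleq
    by_contra hne
    have hmid : (0:ℝ) < (1/2)*l + (1-(1/2))*ls := by norm_num; positivity
    have h := strict_ineq15 k hconc cstar l ls (1/2) hne (by norm_num) (by norm_num)
    have h2 := hmul ((1/2)*l + (1-(1/2))*ls) hmid
    nlinarith [h, h2]
  have hstrict : ∀ l : ℝ, 0 < l → l ≠ ls → cstar * l < -k l := by
    intro l hl hne
    rcases lt_or_eq_of_le (hmul l hl) with h | h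
    · exact h
    · exact absurd (huniq l hl h) hne
  refine ⟨part1, ⟨ls, hlspos, hlseq, huniq, hstrict⟩, ?_⟩
  -- part (iii)
  intro c hc
  set f : ℝ → ℝ := fun l => -k l - c * l with hf
  have hfcont : Continuous f := by
    apply Continuous.sub hcont.neg
    exact continuous_const.mul continuous_id
  have hfls : f ls < 0 := by
    have : c * ls > cstar * ls := mul_lt_mul_of_pos_right hc hlspos
    simp only [hf]
    nlinarith [hlseq]
  have hf0 : 0 < f 0 := by simp only [hf]; simp; linarith
  set M : ℝ := max (max 1 ((|c|+α+1)/β)) (ls+1) with hM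
  have hM1 : (1:ℝ) ≤ M := le_trans (le_max_left _ _) (le_max_left _ _)
  have hMls : ls < M := lt_of_lt_of_le (by linarith) (le_max_right _ _)
  have hMβ : |c| + α + 1 ≤ β * M := by
    have : (|c|+α+1)/β ≤ M := le_trans (le_max_right _ _) (le_max_left _ _)
    rw [div_le_iff₀ hβ] at this; linarith
  have hfM : 0 < f M := by
    have hb := hbound M
    have habs : c * M ≤ |c| * M := by
      apply mul_le_mul_of_nonneg_right (le_abs_self c) (by linarith)
    simp only [hf]
    nlinarith
  -- IVT below ls
  have hiv1 : (0:ℝ) ∈ f '' Set.Icc 0 ls :=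
    intermediate_value_Icc' hlspos.le hfcont.continuousOn ⟨hfls.le, hf0.le⟩
  obtain ⟨l1, hl1mem, hl1⟩ := hiv1
  have hl1ne0 : l1 ≠ 0 := by intro h; rw [h] at hl1; linarith
  have hl1nels : l1 ≠ ls := by intro h; rw [h] at hl1; linarith
  have hl1pos : 0 < l1 := lt_of_le_of_ne hl1mem.1 (Ne.symm hl1ne0)
  have hl1lt : l1 < ls := lt_of_le_of_ne hl1mem.2 hl1nels
  -- IVT above ls
  have hiv2 : (0:ℝ) ∈ f '' Set.Icc ls M :=
    intermediate_value_Icc hMls.le hfcont.continuousOn ⟨hfls.le, hfM.le⟩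
  obtain ⟨l2, hl2mem, hl2⟩ := hiv2
  have hl2nels : l2 ≠ ls := by intro h; rw [h] at hl2; linarith
  have hl2gt : ls < l2 := lt_of_le_of_ne hl2mem.1 (Ne.symm hl2nels)
  have hzl1 : c * l1 = -k l1 := by
    have : -k l1 - c * l1 = 0 := hl1
    linarith
  have hzl2 : c * l2 = -k l2 := by
    have : -k l2 - c * l2 = 0 := hl2
    linarith
  obtain ⟨hbet, hout⟩ := two_zeros15 k hconc c l1 l2 hl1pos (by linarith) hzl1 hzl2
  exact ⟨l1, l2, hl1pos, by linarith, hzl1, hzl2, hbet, hout⟩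
end

section
/- Let k̃ : ℝ → ℝ be continuous, strictly concave, and even (k̃(−λ) = k̃(λ) for all λ), with sup over ℝ of k̃ < 0, and suppose there exist α > 0 and β > 0 such that k̃(λ) ≤ α − β λ² for all λ. Given m ∈ ℝ, set k(λ) := k̃(λ − m), c*_right := inf over λ > 0 of (−k(λ)/λ), and c*_left := inf over λ > 0 of (−k(−λ)/λ). Then c*_right > c*_left if m < 0, and c*_right < c*_left if m > 0. -/
private lemma stmt17_key (kt : ℝ → ℝ) (hcont : Continuous kt)
    (hconc : StrictConcaveOn ℝ Set.univ kt)
    (heven : ∀ l : ℝ, kt (-l) = kt l)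
    (hsup : (⨆ l : ℝ, kt l) < 0)
    (α β : ℝ) (hα : 0 < α) (hβ : 0 < β)
    (hbound : ∀ l : ℝ, kt l ≤ α - β * l ^ 2)
    (m : ℝ) (hm : 0 < m) :
    sInf ((fun l : ℝ => -kt (l - m) / l) '' Set.Ioi 0)
      < sInf ((fun l : ℝ => -kt (l + m) / l) '' Set.Ioi 0) := by
  have hbdd : BddAbove (Set.range kt) := by
    refine ⟨α, ?_⟩
    rintro _ ⟨l, rfl⟩
    have := hbound l
    nlinarith [sq_nonneg l]
  have hle : ∀ l, kt l ≤ ⨆ l, kt l := fun l => le_ciSup hbdd l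
  set s : ℝ := -(⨆ l, kt l) with hs
  have hs0 : 0 < s := by simp only [hs]; linarith
  have hg : ∀ l, s ≤ -kt l := fun l => by have := hle l; simp only [hs]; linarith
  have hktneg : ∀ l, kt l < 0 := fun l => lt_of_le_of_lt (hle l) hsup
  have hconv : StrictConvexOn ℝ Set.univ (fun l => -kt l) := hconc.neg
  have hmono : ∀ a b : ℝ, 0 ≤ a → a < b → -kt a < -kt b := by
    intro a b ha hab
    have hb : 0 < b := lt_of_le_of_lt ha hab
    have h1 : (0:ℝ) < (b + a) / (2 * b) := by positivity
    have h2 : (0:ℝ) < (b - a) / (2 * b) := by apply div_pos <;> linarith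
    have h3 : (b + a) / (2 * b) + (b - a) / (2 * b) = 1 := by field_simp; ring
    have hne : b ≠ -b := by intro h; linarith
    have hcx := hconv.2 (Set.mem_univ b) (Set.mem_univ (-b)) hne h1 h2 h3
    simp only [smul_eq_mul] at hcx
    have hx : (b + a) / (2 * b) * b + (b - a) / (2 * b) * (-b) = a := by
      field_simp; ring
    rw [hx, heven b] at hcx
    calc -kt a < (b + a) / (2 * b) * -kt b + (b - a) / (2 * b) * -kt b := hcx
      _ = -kt b := by field_simp; ring
  have hgabs : ∀ x : ℝ, -kt |x| = -kt x := by
    intro x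
    rcases abs_choice x with h | h
    · rw [h]
    · rw [h, heven]
  have hpt : ∀ l : ℝ, 0 < l → -kt (l - m) < -kt (l + m) := by
    intro l hl
    have h1 : |l - m| < l + m := by
      rw [abs_lt]; constructor <;> linarith
    have := hmono |l - m| (l + m) (abs_nonneg _) h1
    rwa [hgabs] at this
  set h : ℝ → ℝ := fun l => -kt (l + m) / l with hh
  set V : ℝ := -kt (1 + m) with hV
  have hV1 : h 1 = V := by simp [hh, hV]
  have hVpos : 0 < V := by have := hg (1 + m); linarith
  set a : ℝ := min 1 (s / (V + 1)) with ha
  have ha0 : 0 < a := by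
    apply lt_min one_pos
    positivity
  have ha1 : a ≤ 1 := min_le_left _ _
  set L : ℝ := max 1 ((V + 1 + α) / β) with hL
  have hL1 : 1 ≤ L := le_max_left _ _
  have hcontOn : ContinuousOn h (Set.Icc a L) := by
    apply ContinuousOn.div
    · exact ((hcont.comp (continuous_id.add continuous_const)).neg).continuousOn
    · exact continuousOn_id
    · intro x hx h0
      have := hx.1
      rw [h0] at this
      linarith
  obtain ⟨l₀, hl₀mem, hl₀min⟩ := IsCompact.exists_isMinOn isCompact_Icc
    ⟨1, ha1, hL1⟩ hcontOn
  have hl₀pos : 0 < l₀ := lt_of_lt_of_le ha0 hl₀mem.1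
  have hl₀V : h l₀ ≤ V := by rw [← hV1]; exact hl₀min ⟨ha1, hL1⟩
  have hglob : ∀ l : ℝ, 0 < l → h l₀ ≤ h l := by
    intro l hl
    rcases le_or_gt a l with h1 | h1
    · rcases le_or_gt l L with h2 | h2
      · exact hl₀min ⟨h1, h2⟩
      · have hlL : (V + 1 + α) / β < l := lt_of_le_of_lt (le_max_right _ _) h2
        have hl1 : 1 ≤ l := le_trans hL1 h2.le
        have hb2 : β * l ^ 2 - α ≤ -kt (l + m) := by
          have := hbound (l + m)
          nlinarith [mul_pos (mul_pos hβ hl) hm, mul_nonneg hβ.le (sq_nonneg m)]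
        have hdiv : (β * l ^ 2 - α) / l ≤ h l := by
          show _ ≤ -kt (l + m) / l
          exact (div_le_div_iff_of_pos_right hl).mpr hb2
        have hstep : β * l - α ≤ (β * l ^ 2 - α) / l := by
          rw [le_div_iff₀ hl]; nlinarith
        have hVl : V + 1 ≤ β * l - α := by
          rw [div_lt_iff₀ hβ] at hlL; linarith
        linarith
    · have hls : l < s / (V + 1) := lt_of_lt_of_le h1 (min_le_right _ _)
      have hsl : V + 1 < s / l := by
        rw [lt_div_iff₀ hl]
        rw [lt_div_iff₀ (by positivity : (0:ℝ) < V + 1)] at hls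
        linarith
      have hsl2 : s / l ≤ h l := by
        show _ ≤ -kt (l + m) / l
        exact (div_le_div_iff_of_pos_right hl).mpr (hg (l + m))
      linarith
  have hIsLeast : IsLeast ((fun l : ℝ => -kt (l + m) / l) '' Set.Ioi 0) (h l₀) := by
    constructor
    · exact ⟨l₀, hl₀pos, rfl⟩
    · rintro _ ⟨l, hl, rfl⟩
      exact hglob l hl
  rw [hIsLeast.csInf_eq]
  have hbddbelow : BddBelow ((fun l : ℝ => -kt (l - m) / l) '' Set.Ioi 0) := by
    refine ⟨0, ?_⟩
    rintro _ ⟨l, hl, rfl⟩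
    have := hktneg (l - m)
    have hl' : (0:ℝ) < l := hl
    apply div_nonneg (by linarith) hl'.le
  calc sInf ((fun l : ℝ => -kt (l - m) / l) '' Set.Ioi 0)
      ≤ -kt (l₀ - m) / l₀ := csInf_le hbddbelow ⟨l₀, hl₀pos, rfl⟩
    _ < h l₀ := by
        show _ < -kt (l₀ + m) / l₀
        exact (div_lt_div_iff_of_pos_right hl₀pos).mpr (hpt l₀ hl₀pos)

/-- If k(λ) = k̃(λ − m) for an even, continuous, strictly concave
k̃ with negative supremum and quadratic upper bound, then the rightward speed
exceeds the leftward speed exactly when m < 0 (and conversely when m > 0). -/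
theorem stmt17 (kt : ℝ → ℝ) (hcont : Continuous kt)
    (hconc : StrictConcaveOn ℝ Set.univ kt)
    (heven : ∀ l : ℝ, kt (-l) = kt l)
    (hsup : (⨆ l : ℝ, kt l) < 0)
    (α β : ℝ) (hα : 0 < α) (hβ : 0 < β)
    (hbound : ∀ l : ℝ, kt l ≤ α - β * l ^ 2)
    (m : ℝ) :
    let cright := sInf ((fun l : ℝ => -kt (l - m) / l) '' Set.Ioi 0)
    let cleft := sInf ((fun l : ℝ => -kt (-l - m) / l) '' Set.Ioi 0)
    (m < 0 → cleft < cright) ∧ (0 < m → cright < cleft) := by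
  intro cright cleft
  constructor
  · intro hm
    have hm' : 0 < -m := by linarith
    have hkey := stmt17_key kt hcont hconc heven hsup α β hα hβ hbound (-m) hm'
    have e1 : (fun l : ℝ => -kt (l - m) / l) = fun l : ℝ => -kt (l + -m) / l := by
      funext l; rw [sub_eq_add_neg]
    have e2 : (fun l : ℝ => -kt (-l - m) / l) = fun l : ℝ => -kt (l - -m) / l := by
      funext l
      rw [show (-l - m : ℝ) = -(l - -m) by ring, heven]
    show sInf ((fun l : ℝ => -kt (-l - m) / l) '' Set.Ioi 0)
        < sInf ((fun l : ℝ => -kt (l - m) / l) '' Set.Ioi 0)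
    rw [e1, e2]
    exact hkey
  · intro hm
    have hkey := stmt17_key kt hcont hconc heven hsup α β hα hβ hbound m hm
    have e3 : (fun l : ℝ => -kt (-l - m) / l) = fun l : ℝ => -kt (l + m) / l := by
      funext l
      rw [show (-l - m : ℝ) = -(l + m) by ring, heven]
    show sInf ((fun l : ℝ => -kt (l - m) / l) '' Set.Ioi 0)
        < sInf ((fun l : ℝ => -kt (-l - m) / l) '' Set.Ioi 0)
    rw [e3]
    exact hkey
end
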